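/- arXiv:math/0503609 — 2 statements merged into one kernel-verified Lean document; each statement's English description precedes it below -/
import Mathlib

section
/- Let E be a nonzero finite-dimensional real vector space and let ρ be a continuous representation of Circle on E whose fixed subspace is zero. Then the real dimension of E is even. -/
open Polynomial in
lemma aux_odd_root (P : ℝ[X]) (hm : P.Monic) (ho : Odd P.natDegree) :
    ∃ x : ℝ, P.eval x = 0 := by
  have hdegpos : 0 < P.natDegree := ho.pos
  have hdeg : 0 < P.degree := natDegree_pos_iff_degree_pos.mp hdegpos
  have htop : Filter.Tendsto (fun x => P.eval x) Filter.atTop Filter.atTop :=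
    P.tendsto_atTop_of_leadingCoeff_nonneg hdeg (by rw [hm.leadingCoeff]; norm_num)
  set Q : ℝ[X] := P.comp (-X) with hQ
  have hQeval : ∀ x : ℝ, Q.eval x = P.eval (-x) := by
    intro x; simp [hQ]
  have hQdeg : Q.natDegree = P.natDegree := by
    rw [hQ, natDegree_comp]; simp
  have hQlead : Q.leadingCoeff = -1 := by
    rw [hQ, leadingCoeff_comp (by simp)]
    simp [hm.leadingCoeff, ho.neg_one_pow]
  have hbot : Filter.Tendsto (fun x => Q.eval x) Filter.atTop Filter.atBot := by
    apply Q.tendsto_atBot_of_leadingCoeff_nonpos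
    · rw [← natDegree_pos_iff_degree_pos, hQdeg]; exact hdegpos
    · rw [hQlead]; norm_num
  obtain ⟨a, ha⟩ := (htop.eventually_ge_atTop 1).exists
  obtain ⟨b, hb⟩ := (hbot.eventually_le_atBot (-1)).exists
  have : (0 : ℝ) ∈ Set.Icc (P.eval (-b)) (P.eval a) := by
    constructor
    · rw [← hQeval]; linarith
    · linarith
  obtain ⟨x, hx⟩ := intermediate_value_univ (-b) a (P.continuous_aeval) this
  exact ⟨x, hx⟩

open Module in
lemma aux_eigen (E : Type*) [NormedAddCommGroup E] [NormedSpace ℝ E] [FiniteDimensional ℝ E]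
    (T : E →ₗ[ℝ] E) (hodd : Odd (finrank ℝ E)) :
    ∃ (r : ℝ) (w : E), w ≠ 0 ∧ T w = r • w := by
  classical
  obtain ⟨b⟩ : Nonempty (Basis (Fin (finrank ℝ E)) ℝ E) := ⟨Module.finBasis ℝ E⟩
  set M : Matrix (Fin (finrank ℝ E)) (Fin (finrank ℝ E)) ℝ := LinearMap.toMatrix b b T with hM
  have hmon : M.charpoly.Monic := M.charpoly_monic
  have hdeg : M.charpoly.natDegree = finrank ℝ E := by
    rw [Matrix.charpoly_natDegree_eq_dim, Fintype.card_fin]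
  obtain ⟨r, hr⟩ := aux_odd_root M.charpoly hmon (by rw [hdeg]; exact hodd)
  have hdet : (Matrix.diagonal (fun _ => r) - M).det = 0 := by
    have h1 : (Polynomial.evalRingHom r) (M.charmatrix.det) = 0 := hr
    rw [RingHom.map_det] at h1
    convert h1 using 2
    ext i j
    by_cases hij : i = j
    · subst hij
      simp [Matrix.charmatrix_apply_eq]
    · simp [Matrix.charmatrix_apply_ne _ _ _ hij, Matrix.diagonal_apply_ne _ hij]
  obtain ⟨v, hv0, hv⟩ := (Matrix.exists_mulVec_eq_zero_iff).mpr hdet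
  have hMv : M.mulVec v = r • v := by
    rw [Matrix.sub_mulVec, sub_eq_zero] at hv
    rw [← hv]
    ext i
    simp [Matrix.mulVec_diagonal]
  set w : E := b.repr.symm (Finsupp.equivFunOnFinite.symm v) with hw
  have hrepr : ⇑(b.repr w) = v := by
    rw [hw, LinearEquiv.apply_symm_apply]
    ext i; simp
  refine ⟨r, w, ?_, ?_⟩
  · intro h
    apply hv0
    rw [← hrepr, h, map_zero]
    rfl
  · have h2 : ⇑(b.repr (T w)) = M.mulVec v := by
      rw [← LinearMap.toMatrix_mulVec_repr b b T w, hrepr]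
    apply b.repr.injective
    apply DFunLike.coe_injective; show ⇑(b.repr (T w)) = ⇑(b.repr (r • w))
    rw [h2, hMv, map_smul, Finsupp.coe_smul, hrepr]

lemma aux_dense : Dense (Set.range fun m : ℤ => Circle.exp (2 * m)) := by
  have hS : Dense ((AddSubgroup.closure {(2 : ℝ), 2 * Real.pi} : AddSubgroup ℝ) : Set ℝ) := by
    rcases AddSubgroup.dense_or_cyclic (AddSubgroup.closure {(2 : ℝ), 2 * Real.pi}) with h | ⟨a, ha⟩
    · exact h
    · exfalso
      have h2 : (2 : ℝ) ∈ AddSubgroup.closure ({a} : Set ℝ) := by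
        rw [← ha]; exact AddSubgroup.subset_closure (by simp)
      have hp : (2 * Real.pi : ℝ) ∈ AddSubgroup.closure ({a} : Set ℝ) := by
        rw [← ha]; exact AddSubgroup.subset_closure (by simp)
      rw [AddSubgroup.mem_closure_singleton] at h2 hp
      obtain ⟨m, hm⟩ := h2
      obtain ⟨k, hk⟩ := hp
      rw [zsmul_eq_mul] at hm hk
      have hm0 : (m : ℝ) ≠ 0 := by
        rintro h; rw [h, zero_mul] at hm; norm_num at hm
      have ha0 : a ≠ 0 := by
        rintro rfl; rw [mul_zero] at hm; norm_num at hm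
      apply irrational_pi
      refine ⟨(k : ℚ) / (m : ℚ), ?_⟩
      have : Real.pi = (k : ℝ) / (m : ℝ) := by
        have h2pi : Real.pi = (k : ℝ) * a / 2 := by linarith [hk]
        rw [h2pi, ← hm]
        field_simp
      rw [this]; push_cast; ring
  intro ζ
  have h1 : ζ = Circle.exp (Complex.arg ζ) := (Circle.exp_arg ζ).symm
  have h2 : (Complex.arg ζ : ℝ) ∈ closure ((AddSubgroup.closure {(2 : ℝ), 2 * Real.pi} : AddSubgroup ℝ) : Set ℝ) := hS _
  have h3 : Circle.exp (Complex.arg ζ) ∈ closure (Circle.exp '' ((AddSubgroup.closure {(2 : ℝ), 2 * Real.pi} : AddSubgroup ℝ) : Set ℝ)) := by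
    apply image_closure_subset_closure_image Circle.exp.continuous
    exact Set.mem_image_of_mem _ h2
  have h4 : Circle.exp '' ((AddSubgroup.closure {(2 : ℝ), 2 * Real.pi} : AddSubgroup ℝ) : Set ℝ)
      ⊆ Set.range fun m : ℤ => Circle.exp (2 * m) := by
    rintro - ⟨x, hx, rfl⟩
    rw [SetLike.mem_coe, AddSubgroup.mem_closure_pair] at hx
    obtain ⟨m, k, hmk⟩ := hx
    refine ⟨m, ?_⟩
    rw [← hmk, zsmul_eq_mul, zsmul_eq_mul, Circle.exp_add]
    have : Circle.exp ((k : ℝ) * (2 * Real.pi)) = 1 := Circle.exp_int_mul_two_pi k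
    rw [this, mul_one]
    norm_num [mul_comm]
  rw [h1]
  exact closure_mono h4 h3

/-- A nonzero finite-dimensional real vector space carrying a continuous
`Circle`-representation with zero fixed subspace has even real dimension. -/
theorem even_finrank_of_fixedPointFree_circle_rep
    (E : Type*) [NormedAddCommGroup E] [NormedSpace ℝ E] [FiniteDimensional ℝ E]
    [Nontrivial E]
    (ρ : Circle →* (E →ₗ[ℝ] E))
    (hcont : Continuous fun p : Circle × E => ρ p.1 p.2)
    (hfix : ∀ v : E, (∀ z : Circle, ρ z v = v) → v = 0) :
    Even (Module.finrank ℝ E) := by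
  by_contra hodd
  rw [← Nat.not_odd_iff_even, not_not] at hodd
  obtain ⟨r, w, hw0, hTw⟩ := aux_eigen E (ρ (Circle.exp 1)) hodd
  have hρw : Continuous fun z : Circle => ρ z w :=
    hcont.comp (continuous_id.prodMk continuous_const)
  -- ρ (exp x) ∘ ρ (exp (-x)) = id
  have hinv : ∀ (x : ℝ) (u : E), ρ (Circle.exp x) (ρ (Circle.exp (-x)) u) = u := by
    intro x u
    rw [← Module.End.mul_apply, ← map_mul, ← Circle.exp_add]
    simp
  have hinv2 : ∀ (x : ℝ) (u : E), ρ (Circle.exp (-x)) (ρ (Circle.exp x) u) = u := by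
    intro x u
    have := hinv (-x) u
    rwa [neg_neg] at this
  have hr0 : r ≠ 0 := by
    rintro rfl
    apply hw0
    rw [← hinv2 1 w, hTw, zero_smul, map_zero]
  have hnat : ∀ k : ℕ, ρ (Circle.exp k) w = r ^ k • w := by
    intro k
    induction k with
    | zero => simp
    | succ k ih =>
      have : ((k + 1 : ℕ) : ℝ) = (k : ℝ) + 1 := by push_cast; ring
      rw [this, Circle.exp_add, map_mul, Module.End.mul_apply, hTw, map_smul, ih,
        smul_smul, ← pow_succ']
  have hint : ∀ m : ℤ, ρ (Circle.exp m) w = r ^ m • w := by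
    intro m
    rcases le_or_gt 0 m with hm | hm
    · lift m to ℕ using hm
      rw [Int.cast_natCast, hnat, zpow_natCast]
    · obtain ⟨k, rfl⟩ : ∃ k : ℕ, m = -(k : ℤ) := ⟨m.natAbs, by omega⟩
      have hrk : (r : ℝ) ^ (k : ℕ) ≠ 0 := pow_ne_zero _ hr0
      have h3 : ρ (Circle.exp ((k : ℕ) : ℝ)) ((r ^ (k : ℕ))⁻¹ • w) = w := by
        rw [map_smul, hnat, smul_smul, inv_mul_cancel₀ hrk, one_smul]
      have h2 : ρ (Circle.exp ((-(k : ℤ) : ℤ) : ℝ)) w = (r ^ (k : ℕ))⁻¹ • w := by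
        conv_lhs => rw [← h3]
        rw [← Module.End.mul_apply, ← map_mul, ← Circle.exp_add]
        have hx : ((-(k : ℤ) : ℤ) : ℝ) + ((k : ℕ) : ℝ) = 0 := by push_cast; ring
        rw [hx]
        simp
      rw [h2, zpow_neg, zpow_natCast]
  -- bound
  have hCS : IsCompact (Set.range fun z : Circle => ‖ρ z w‖) :=
    isCompact_range (continuous_norm.comp hρw)
  obtain ⟨C, hC⟩ := hCS.bddAbove
  have hCb : ∀ z : Circle, ‖ρ z w‖ ≤ C := fun z => hC (Set.mem_range_self z)
  have hbound : ∀ m : ℤ, ‖r‖ ^ m * ‖w‖ ≤ C := by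
    intro m
    have := hCb (Circle.exp m)
    rw [hint, norm_smul, norm_zpow] at this
    exact this
  have hwpos : (0 : ℝ) < ‖w‖ := norm_pos_iff.mpr hw0
  have key : ∀ s : ℝ, 1 < s → ¬ (∀ k : ℕ, s ^ k * ‖w‖ ≤ C) := by
    intro s hs h
    have htend : Filter.Tendsto (fun k : ℕ => s ^ k * ‖w‖) Filter.atTop Filter.atTop :=
      (tendsto_pow_atTop_atTop_of_one_lt hs).atTop_mul_const hwpos
    obtain ⟨k, hk⟩ := (htend.eventually_gt_atTop C).exists
    exact absurd (h k) (not_le.mpr hk)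
  have habs : ‖r‖ = 1 := by
    rcases lt_trichotomy ‖r‖ 1 with h | h | h
    · exfalso
      apply key ‖r‖⁻¹ ((one_lt_inv₀ (norm_pos_iff.mpr hr0)).mpr h)
      intro k
      have := hbound (-(k : ℤ))
      rw [zpow_neg, zpow_natCast, ← inv_pow] at this
      exact this
    · exact h
    · exfalso
      apply key ‖r‖ h
      intro k
      have := hbound (k : ℤ)
      rw [zpow_natCast] at this
      exact this
  have hr2 : r ^ 2 = 1 := by
    rw [← sq_abs, ← Real.norm_eq_abs, habs, one_pow]
  have hfix2 : ∀ m : ℤ, ρ (Circle.exp (2 * (m : ℝ))) w = w := by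
    intro m
    have h1 : (2 * (m : ℝ)) = ((2 * m : ℤ) : ℝ) := by push_cast; ring
    rw [h1, hint, zpow_mul, zpow_two, ← sq, hr2, one_zpow, one_smul]
  have hall : (fun z : Circle => ρ z w) = fun _ => w := by
    apply Continuous.ext_on aux_dense hρw continuous_const
    rintro - ⟨m, rfl⟩
    exact hfix2 m
  exact hw0 (hfix w fun z => congrFun hall z)
end

section
/- Let E be a nonzero finite-dimensional real vector space and let ρ be a continuous representation of Circle on E that is irreducible (the only subspaces F ⊆ E with ρ(z)F ⊆ F for all z ∈ Circle are 0 and E) and nontrivial (ρ(z) ≠ id_E for some z ∈ Circle). Then there exist an integer λ ≥ 1 and an ℝ-linear isomorphism φ : E → ℂ such that φ(ρ(z)v) = z^λ · φ(v) for all z ∈ Circle and all v ∈ E. In particular, E has real dimension 2. -/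
open Real
open Real

/-- Integer multiples of dyadic fractions of a positive real are dense. -/
lemma CircleRepAux.dyadic_dense {S : Set ℝ} (hS : IsClosed S) {c : ℝ} (hc : 0 < c)
    (h : ∀ (m : ℤ) (k : ℕ), ((m : ℝ) * (c / 2 ^ k)) ∈ S) (t : ℝ) : t ∈ S := by
  have hkey : Filter.Tendsto (fun k : ℕ => ((⌊t * 2 ^ k / c⌋ : ℝ)) * (c / 2 ^ k))
      Filter.atTop (nhds t) := by
    rw [tendsto_iff_dist_tendsto_zero]
    have hb : ∀ k : ℕ, dist ((⌊t * 2 ^ k / c⌋ : ℝ) * (c / 2 ^ k)) t ≤ c / 2 ^ k := by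
      intro k
      have h2 : (0:ℝ) < 2 ^ k := by positivity
      set y : ℝ := t * 2 ^ k / c with hy
      have ht : t = y * (c / 2 ^ k) := by field_simp [hy]; rw [hy, div_mul_cancel₀ _ hc.ne']
      rw [Real.dist_eq]
      calc |(⌊y⌋ : ℝ) * (c / 2 ^ k) - t| = |((⌊y⌋ : ℝ) - y) * (c / 2 ^ k)| := by
            rw [sub_mul, ← ht]
        _ = |(⌊y⌋ : ℝ) - y| * (c / 2 ^ k) := by
            rw [abs_mul, abs_of_pos (div_pos hc h2)]
        _ ≤ 1 * (c / 2 ^ k) := by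
            have h1 : (⌊y⌋ : ℝ) ≤ y := Int.floor_le y
            have h2' : y < (⌊y⌋ : ℝ) + 1 := Int.lt_floor_add_one y
            gcongr
            rw [abs_sub_comm, abs_of_nonneg (by linarith)]
            linarith
        _ = c / 2 ^ k := one_mul _
    have hlim : Filter.Tendsto (fun k : ℕ => c / 2 ^ k) Filter.atTop (nhds 0) := by
      have : Filter.Tendsto (fun k : ℕ => c * (2⁻¹ : ℝ) ^ k) Filter.atTop (nhds (c * 0)) :=
        (tendsto_pow_atTop_nhds_zero_of_lt_one (by norm_num) (by norm_num)).const_mul c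
      simpa [div_eq_mul_inv, inv_pow] using this
    exact squeeze_zero (fun k => dist_nonneg) hb hlim
  exact hS.mem_of_tendsto hkey (Filter.Eventually.of_forall fun k => h _ k)

/-- A continuous real-valued homomorphism `(ℝ,+) → (ℝ,*)` that is `1` at `2π` is constant `1`. -/
lemma CircleRepAux.posHom_eq_one {M : ℝ → ℝ} (hom : ∀ s t, M (s + t) = M s * M t)
    (hcont : Continuous M) (hper : M (2 * π) = 1) : ∀ t, M t = 1 := by
  have hM0 : M 0 = 1 := by
    have h1 := hom (2 * π) 0
    rw [add_zero, hper, one_mul] at h1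
    exact h1.symm
  have hne : ∀ t, M t ≠ 0 := by
    intro t
    have h1 : M t * M (-t) = 1 := by rw [← hom, add_neg_cancel, hM0]
    exact left_ne_zero_of_mul_eq_one h1
  have hpos : ∀ t, 0 < M t := by
    intro t
    have h1 : M t = M (t/2) * M (t/2) := by rw [← hom]; norm_num
    rcases lt_of_le_of_ne (h1 ▸ mul_self_nonneg (M (t/2))) (Ne.symm (hne t)) with h
    exact h
  have hdyad : ∀ k : ℕ, M (2 * π / 2 ^ k) = 1 := by
    intro k
    induction k with
    | zero => simpa using hper
    | succ k ih =>
      have h1 : M (2 * π / 2 ^ (k+1)) * M (2 * π / 2 ^ (k+1)) = 1 := by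
        rw [← hom]
        have : 2 * π / 2 ^ (k+1) + 2 * π / 2 ^ (k+1) = 2 * π / 2 ^ k := by ring
        rw [this, ih]
      rcases mul_self_eq_one_iff.mp h1 with h | h
      · exact h
      · exact absurd h (by have := hpos (2 * π / 2 ^ (k+1)); intro hcon; rw [hcon] at this; linarith)
  have hnat : ∀ (x : ℝ), M x = 1 → ∀ n : ℕ, M (n * x) = 1 := by
    intro x hx n
    induction n with
    | zero => simpa using hM0
    | succ n ih => push_cast; rw [add_mul, one_mul, hom, ih, hx, one_mul]
  have hint : ∀ (x : ℝ), M x = 1 → ∀ m : ℤ, M ((m : ℝ) * x) = 1 := by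
    intro x hx m
    rcases Int.eq_nat_or_neg m with ⟨n, rfl | rfl⟩
    · push_cast; exact hnat x hx n
    · push_cast
      have h1 : M ((n : ℝ) * x) = 1 := hnat x hx n
      have h2 : M ((n:ℝ) * x) * M (-((n:ℝ) * x)) = 1 := by rw [← hom, add_neg_cancel, hM0]
      rw [h1, one_mul] at h2
      rw [neg_mul]; exact h2
  intro t
  have hS : IsClosed {t : ℝ | M t = 1} := isClosed_eq hcont continuous_const
  exact CircleRepAux.dyadic_dense hS (by positivity : (0:ℝ) < 2 * π)
    (fun m k => hint _ (hdyad k) m) t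

/-- Homomorphisms `(ℝ,+) → G` respect integer powers. -/
lemma CircleRepAux.hom_zpow {G : Type*} [Group G] {g : ℝ → G}
    (h : ∀ s t, g (s + t) = g s * g t) (m : ℤ) (x : ℝ) : g ((m : ℝ) * x) = g x ^ m := by
  have h0 : g 0 = 1 := by
    have := h 0 0
    rw [add_zero] at this
    exact (left_eq_mul.mp this)
  have hn : ∀ (n : ℕ) (x : ℝ), g ((n : ℝ) * x) = g x ^ n := by
    intro n x
    induction n with
    | zero => simpa using h0
    | succ k ih => push_cast; rw [add_mul, one_mul, h, ih, pow_succ]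
  have hneg : ∀ x, g (-x) = (g x)⁻¹ := fun x =>
    eq_inv_of_mul_eq_one_left (by rw [← h, neg_add_cancel, h0])
  rcases Int.eq_nat_or_neg m with ⟨n, rfl | rfl⟩
  · push_cast; rw [hn, zpow_natCast]
  · push_cast; rw [neg_mul, hneg, hn, zpow_neg, zpow_natCast]

/-- Every continuous homomorphism `(ℝ,+) → Circle` vanishing at `2π` is `t ↦ exp (n t)`. -/
lemma CircleRepAux.circleHom {f : ℝ → Circle} (hom : ∀ s t, f (s + t) = f s * f t)
    (hcont : Continuous f) (hper : f (2 * π) = 1) :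
    ∃ n : ℤ, ∀ t : ℝ, f t = Circle.exp ((n : ℝ) * t) := by
  have h0 : f 0 = 1 := by
    have := hom 0 0
    rw [add_zero] at this
    exact (left_eq_mul.mp this)
  -- continuity of `arg ∘ f` at 0
  have hargc : ContinuousAt (fun t => Complex.arg (f t)) 0 := by
    have h1 : ContinuousAt Complex.arg ((f 0 : ℂ)) := by
      rw [h0]
      exact Complex.continuousAt_arg (by simpa using Complex.one_mem_slitPlane)
    have h2 : ContinuousAt (fun t : ℝ => (f t : ℂ)) 0 :=
      (continuous_subtype_val.comp hcont).continuousAt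
    exact ContinuousAt.comp (x := (0:ℝ)) h1 h2
  have ha0 : Complex.arg (f 0) = 0 := by rw [h0]; simp
  have h1 : (fun t => Complex.arg (f t)) ⁻¹' Set.Ioo (-(π/2)) (π/2) ∈ nhds (0:ℝ) := by
    apply hargc.preimage_mem_nhds
    rw [ha0]
    exact Ioo_mem_nhds (by simpa using pi_div_two_pos) pi_div_two_pos
  obtain ⟨ε, hε, hball⟩ := Metric.mem_nhds_iff.mp h1
  set δ : ℝ := ε / 2 with hδdef
  have hδpos : 0 < δ := by positivity
  have hδ : ∀ t : ℝ, |t| ≤ δ → |Complex.arg (f t)| < π / 2 := by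
    intro t ht
    have htb : t ∈ Metric.ball (0:ℝ) ε := by
      rw [Metric.mem_ball, Real.dist_eq, sub_zero]
      calc |t| ≤ ε / 2 := ht
        _ < ε := by linarith
    have := hball htb
    rw [Set.mem_preimage, Set.mem_Ioo] at this
    rw [abs_lt]
    exact ⟨by linarith [this.1], this.2⟩
  set α : ℝ := Complex.arg (f δ) with hαdef
  have hpow : ∀ k : ℕ, Complex.arg (f (δ / 2 ^ k)) = α / 2 ^ k := by
    intro k
    induction k with
    | zero => simp [hαdef]
    | succ k ih =>
      set β : ℝ := Complex.arg (f (δ / 2 ^ (k+1))) with hβdef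
      have hβ : |β| < π / 2 := by
        apply hδ
        rw [abs_of_pos (by positivity)]
        calc δ / 2 ^ (k+1) ≤ δ / 1 := by
              apply div_le_div_of_nonneg_left hδpos.le one_pos
              exact one_le_pow₀ (by norm_num)
          _ = δ := div_one δ
      have hsplit : δ / 2 ^ k = δ / 2 ^ (k+1) + δ / 2 ^ (k+1) := by ring
      have hfe : f (δ / 2 ^ k) = Circle.exp (β + β) := by
        rw [hsplit, hom, Circle.exp_add]
        congr 1 <;> exact (Circle.exp_arg _).symm
      have hβlt := abs_lt.mp hβ
      have harg : Complex.arg (f (δ / 2 ^ k)) = β + β := by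
        rw [hfe]
        exact Circle.arg_exp (by linarith) (by linarith)
      rw [ih] at harg
      have h2k : (0:ℝ) < 2 ^ k := by positivity
      have hα : α = (β + β) * 2 ^ k := (div_eq_iff (ne_of_gt h2k)).mp harg
      rw [pow_succ]
      rw [eq_comm, div_eq_iff (by positivity)]
      rw [hα]; ring
  have hB : ∀ k : ℕ, f (δ / 2 ^ k) = Circle.exp (α / 2 ^ k) := fun k => by
    rw [← hpow k, Circle.exp_arg]
  have hexp_hom : ∀ s t : ℝ, Circle.exp (s + t) = Circle.exp s * Circle.exp t :=
    fun s t => Circle.exp_add s t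
  have hC : ∀ (m : ℤ) (k : ℕ),
      f ((m : ℝ) * (δ / 2 ^ k)) = Circle.exp ((α / δ) * ((m : ℝ) * (δ / 2 ^ k))) := by
    intro m k
    rw [CircleRepAux.hom_zpow hom, hB]
    have harith : (α / δ) * ((m : ℝ) * (δ / 2 ^ k)) = (m : ℝ) * (α / 2 ^ k) := by
      field_simp
    rw [harith, CircleRepAux.hom_zpow hexp_hom]
  have hD : ∀ t : ℝ, f t = Circle.exp ((α / δ) * t) := by
    have hSc : IsClosed {t : ℝ | f t = Circle.exp ((α / δ) * t)} :=
      isClosed_eq hcont (Circle.exp.continuous.comp (continuous_const.mul continuous_id))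
    exact fun t => CircleRepAux.dyadic_dense hSc hδpos (fun m k => hC m k) t
  have hone : Circle.exp ((α / δ) * (2 * π)) = 1 := by rw [← hD, hper]
  obtain ⟨n, hn⟩ := Circle.exp_eq_one.mp hone
  have h2π : (2 * π) ≠ 0 := by positivity
  have haδ : α / δ = (n : ℝ) := by
    have : (α / δ) * (2 * π) = (n : ℝ) * (2 * π) := hn
    exact mul_right_cancel₀ h2π this
  exact ⟨n, fun t => by rw [hD t, haδ]⟩

set_option maxHeartbeats 2000000 in
set_option synthInstance.maxHeartbeats 200000 in
/-- Every nontrivial irreducible continuous real representation of `Circle` is isomorphic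
to `ℂ_λ` for some integer `λ ≥ 1`, i.e. `ℂ` with `z` acting as multiplication by `z^λ`;
in particular the representation space has real dimension `2`. -/
theorem irreducible_nontrivial_circle_rep_classification
    (E : Type*) [NormedAddCommGroup E] [NormedSpace ℝ E] [FiniteDimensional ℝ E]
    [Nontrivial E]
    (ρ : Circle →* (E →ₗ[ℝ] E))
    (hcont : Continuous fun p : Circle × E => ρ p.1 p.2)
    (hirr : ∀ F : Submodule ℝ E, (∀ (z : Circle), ∀ v ∈ F, ρ z v ∈ F) → F = ⊥ ∨ F = ⊤)
    (hnontriv : ∃ z : Circle, ρ z ≠ LinearMap.id) :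
    (∃ lam : ℤ, 1 ≤ lam ∧ ∃ φ : E ≃ₗ[ℝ] ℂ,
        ∀ (z : Circle) (v : E), φ (ρ z v) = (↑(z ^ lam) : ℂ) * φ v) ∧
    Module.finrank ℝ E = 2 := by
  classical
  obtain ⟨v₀, hv₀⟩ := exists_ne (0 : E)
  -- continuity of the orbit map of `v₀`
  have hρv₀ : Continuous fun z : Circle => ρ z v₀ :=
    hcont.comp (continuous_id.prodMk continuous_const)
  -- Schur's lemma
  have hSchur : ∀ T : E →ₗ[ℝ] E, (∀ z : Circle, ρ z * T = T * ρ z) →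
      T = 0 ∨ Function.Bijective T := by
    intro T hT
    rcases hirr (LinearMap.ker T) (by
      intro z v hv
      rw [LinearMap.mem_ker] at hv ⊢
      have : T (ρ z v) = ρ z (T v) := by
        have := congrArg (fun S => S v) (hT z)
        simpa [Module.End.mul_apply] using this.symm
      rw [this, hv, map_zero]) with hker | hker
    · -- ker = ⊥ : injective
      have hinj : Function.Injective T := LinearMap.ker_eq_bot.mp hker
      rcases hirr (LinearMap.range T) (by
        intro z v hv
        obtain ⟨w, rfl⟩ := hv
        have : ρ z (T w) = T (ρ z w) := by
          have := congrArg (fun S => S w) (hT z)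
          simpa [Module.End.mul_apply] using this
        rw [this]
        exact LinearMap.mem_range_self T _) with hrg | hrg
      · left
        exact LinearMap.range_eq_bot.mp hrg
      · right
        exact ⟨hinj, LinearMap.range_eq_top.mp hrg⟩
    · left
      exact LinearMap.ker_eq_top.mp hker
  -- the commutative algebra generated by the image of ρ
  set s : Set (Module.End ℝ E) := Set.range (fun z : Circle => (ρ z : Module.End ℝ E)) with hs
  have hcommgen : ∀ a ∈ s, ∀ b ∈ s, a * b = b * a := by
    rintro a ⟨z, rfl⟩ b ⟨w, rfl⟩
    simp only
    rw [← map_mul, ← map_mul, mul_comm z w]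
  set A : Subalgebra ℝ (Module.End ℝ E) := Algebra.adjoin ℝ s with hA
  have hmem : ∀ z : Circle, (ρ z : Module.End ℝ E) ∈ A := fun z =>
    Algebra.subset_adjoin ⟨z, rfl⟩
  have hAcomm : ∀ a b : A, a * b = b * a := by
    rintro ⟨a, ha⟩ ⟨b, hb⟩
    have hle := Algebra.adjoin_le_centralizer_centralizer ℝ s
    exact Subtype.ext <|
      Set.centralizer_centralizer_comm_of_comm hcommgen a (hle ha) b (hle hb)
  -- elements of A commute with every ρ z
  have hcommA : ∀ (a : A) (z : Circle), ρ z * (a : Module.End ℝ E) = (a : Module.End ℝ E) * ρ z :=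
    fun a z => congrArg Subtype.val (hAcomm ⟨ρ z, hmem z⟩ a)
  have hbij : ∀ a : A, (a : Module.End ℝ E) ≠ 0 → Function.Bijective (a : Module.End ℝ E) := by
    intro a ha
    rcases hSchur a (fun z => hcommA a z) with h | h
    · exact absurd h ha
    · exact h
  haveI : FiniteDimensional ℝ A := FiniteDimensional.finiteDimensional_subalgebra A
  -- evaluation at v₀
  set evA : A →ₗ[ℝ] E :=
    { toFun := fun a => (a : Module.End ℝ E) v₀
      map_add' := fun a b => rfl
      map_smul' := fun c a => rfl } with hevA
  have hevA_apply : ∀ a : A, evA a = (a : Module.End ℝ E) v₀ := fun a => rfl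
  have hinj : Function.Injective evA := by
    intro a b hab
    by_contra hne
    have hne' : ((a - b : A) : Module.End ℝ E) ≠ 0 := by
      intro hcon
      apply hne
      have : (a - b : A) = 0 := Subtype.ext (by simpa using hcon)
      exact sub_eq_zero.mp this
    have hbij' := hbij _ hne'
    have : ((a - b : A) : Module.End ℝ E) v₀ = 0 := by
      have : ((a - b : A) : Module.End ℝ E) v₀ = evA a - evA b := by
        simp [hevA_apply]
      rw [this, hab, sub_self]
    have hv0 : v₀ = 0 := by
      apply hbij'.injective
      simpa using this
    exact hv₀ hv0
  have hsurj : Function.Surjective evA := by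
    have hrange := hirr (LinearMap.range evA) (by
      rintro z v ⟨a, rfl⟩
      refine ⟨⟨ρ z, hmem z⟩ * a, ?_⟩
      simp [hevA_apply, Module.End.mul_apply])
    rcases hrange with h | h
    · exfalso
      have : evA 1 ∈ LinearMap.range evA := LinearMap.mem_range_self evA 1
      rw [h] at this
      rw [Submodule.mem_bot] at this
      rw [hevA_apply] at this
      simp at this
      exact hv₀ this
    · exact LinearMap.range_eq_top.mp h
  set e : A ≃ₗ[ℝ] E := LinearEquiv.ofBijective evA ⟨hinj, hsurj⟩ with he
  have hfr : Module.finrank ℝ A = Module.finrank ℝ E := e.finrank_eq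
  -- A is a field
  haveI : Nontrivial A := by
    refine ⟨0, 1, fun h => ?_⟩
    have : ((0 : A) : Module.End ℝ E) v₀ = ((1 : A) : Module.End ℝ E) v₀ := by rw [h]
    simp [Module.End.one_apply] at this
    exact hv₀ this.symm
  have hisField : IsField A := by
    refine ⟨exists_pair_ne A, fun a b => hAcomm a b, ?_⟩
    intro a ha
    have havne : (a : Module.End ℝ E) ≠ 0 := by
      intro hcon
      exact ha (Subtype.ext (by simpa using hcon))
    have habij := hbij a havne
    have hLinj : Function.Injective (LinearMap.mulLeft ℝ a) := by
      intro b c hbc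
      have h1 : (a : Module.End ℝ E) * (b : Module.End ℝ E)
          = (a : Module.End ℝ E) * (c : Module.End ℝ E) := congrArg Subtype.val hbc
      apply Subtype.ext
      apply LinearMap.ext
      intro v
      apply habij.injective
      have := congrArg (fun S => S v) h1
      simpa [Module.End.mul_apply] using this
    have hLsurj := (LinearMap.injective_iff_surjective).mp hLinj
    obtain ⟨b, hb⟩ := hLsurj 1
    exact ⟨b, hb⟩
  letI instFieldA : Field A := hisField.toField
  -- embed A into ℂ
  haveI : NoZeroSMulDivisors ℝ A := inferInstance
  haveI : Algebra.IsAlgebraic ℝ A := Algebra.IsAlgebraic.of_finite ℝ A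
  let ψ : A →ₐ[ℝ] ℂ := IsAlgClosed.lift
  have hψinj : Function.Injective ψ := RingHom.injective (ψ.toRingHom)
  have hle2 : Module.finrank ℝ A ≤ 2 := by
    have := LinearMap.finrank_le_finrank_of_injective (f := ψ.toLinearMap) hψinj
    simpa [Complex.finrank_real_complex] using this
  have hge1 : 0 < Module.finrank ℝ A := Module.finrank_pos
  -- rule out the one-dimensional case
  have hcase1 : Module.finrank ℝ A ≠ 1 := by
    intro h1rank
    have hA1 : (1 : A) ≠ 0 := one_ne_zero
    have hscal : ∀ z : Circle, ∃ cc : ℝ, cc • (1 : A) = ⟨ρ z, hmem z⟩ := fun z =>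
      (finrank_eq_one_iff_of_nonzero' (1 : A) hA1).mp h1rank _
    choose c hc using hscal
    have hρeq : ∀ (z : Circle) (v : E), ρ z v = c z • v := by
      intro z v
      have h1 : ((c z • (1 : A) : A) : Module.End ℝ E) = ρ z := congrArg Subtype.val (hc z)
      have h2 : ((c z • (1 : A) : A) : Module.End ℝ E) v = c z • v := by
        simp [Module.End.one_apply]
      rw [← h1, h2]
    have hsmulinj : Function.Injective fun r : ℝ => r • v₀ := smul_left_injective ℝ hv₀
    have hc1 : c 1 = 1 := by
      apply hsmulinj
      simp only
      rw [← hρeq 1 v₀, map_one ρ]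
      simp
    have hcmul : ∀ z w : Circle, c (z * w) = c z * c w := by
      intro z w
      apply hsmulinj
      simp only
      rw [← hρeq (z * w) v₀, map_mul ρ, Module.End.mul_apply, hρeq w v₀, map_smul,
        hρeq z v₀, smul_smul, mul_comm (c w) (c z)]
    -- a continuous linear functional detecting v₀
    obtain ⟨g, hgnorm, hgv₀⟩ := exists_dual_vector ℝ v₀ (norm_ne_zero_iff.mpr hv₀)
    have hgv₀' : g v₀ = ‖v₀‖ := by simpa using hgv₀
    have hv₀norm : ‖v₀‖ ≠ 0 := norm_ne_zero_iff.mpr hv₀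
    have hcform : ∀ z : Circle, c z = g (ρ z v₀) / ‖v₀‖ := by
      intro z
      rw [hρeq z v₀, map_smul, hgv₀']
      field_simp
      rw [smul_eq_mul]
    set M : ℝ → ℝ := fun t => c (Circle.exp t) with hM
    have hMhom : ∀ s t : ℝ, M (s + t) = M s * M t := by
      intro s t
      simp only [hM]
      rw [Circle.exp_add, hcmul]
    have hMcont : Continuous M := by
      have : M = fun t => g (ρ (Circle.exp t) v₀) / ‖v₀‖ := funext fun t => hcform _
      rw [this]
      exact (g.continuous.comp (hρv₀.comp Circle.exp.continuous)).div_const _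
    have hMper : M (2 * π) = 1 := by
      simp only [hM]
      rw [Circle.exp_two_pi, hc1]
    have hM1 := CircleRepAux.posHom_eq_one hMhom hMcont hMper
    have hcall : ∀ z : Circle, ρ z = LinearMap.id := by
      intro z
      have hcz : c z = 1 := by
        have := hM1 (Complex.arg z)
        simpa only [hM, Circle.exp_arg] using this
      apply LinearMap.ext
      intro v
      rw [hρeq z v, hcz, one_smul, LinearMap.id_apply]
    obtain ⟨z, hz⟩ := hnontriv
    exact hz (hcall z)
  have h2rank : Module.finrank ℝ A = 2 := by omega
  -- ψ is an isomorphism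
  have hψbij : Function.Bijective ψ.toLinearMap := by
    refine ⟨hψinj, ?_⟩
    have heq : Module.finrank ℝ A = Module.finrank ℝ ℂ := by
      rw [h2rank, Complex.finrank_real_complex]
    exact (LinearMap.injective_iff_surjective_of_finrank_eq_finrank heq).mp hψinj
  set ψe : A ≃ₗ[ℝ] ℂ := LinearEquiv.ofBijective ψ.toLinearMap hψbij with hψe
  have hψe_apply : ∀ a : A, ψe a = ψ a := fun a => rfl
  set φ : E ≃ₗ[ℝ] ℂ := e.symm.trans ψe with hφ
  set χ : Circle → ℂ := fun z => ψ ⟨ρ z, hmem z⟩ with hχ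
  have key : ∀ (z : Circle) (v : E), φ (ρ z v) = χ z * φ v := by
    intro z v
    set a : A := e.symm v with ha
    have hva : v = (a : Module.End ℝ E) v₀ := by
      have : e a = v := e.apply_symm_apply v
      rw [← this]
      rfl
    have hρzv : ρ z v = evA (⟨ρ z, hmem z⟩ * a) := by
      rw [hevA_apply]
      rw [hva]
      rfl
    have h1 : φ (ρ z v) = ψ (⟨ρ z, hmem z⟩ * a) := by
      rw [hφ, LinearEquiv.trans_apply, hρzv]
      have : e.symm (evA (⟨ρ z, hmem z⟩ * a)) = ⟨ρ z, hmem z⟩ * a := by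
        have := e.symm_apply_apply (⟨ρ z, hmem z⟩ * a)
        exact this
      rw [this, hψe_apply]
    rw [h1, map_mul]
    have h2 : ψ a = φ v := by rw [hφ, LinearEquiv.trans_apply, ← ha, hψe_apply]
    rw [← h2]
  have hχmul : ∀ z w : Circle, χ (z * w) = χ z * χ w := by
    intro z w
    simp only [hχ]
    rw [← map_mul]
    congr 1
    exact Subtype.ext (map_mul ρ z w)
  have hχ1 : χ 1 = 1 := by
    have h2 : (⟨ρ 1, hmem 1⟩ : A) = 1 := Subtype.ext (map_one ρ)
    show ψ ⟨ρ 1, hmem 1⟩ = 1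
    rw [h2, map_one]
  have hφv₀ : φ v₀ = 1 := by
    have h1 : e 1 = v₀ := by
      rw [he]
      show evA 1 = v₀
      rw [hevA_apply]
      simp
    have : e.symm v₀ = 1 := by rw [← h1, e.symm_apply_apply]
    rw [hφ, LinearEquiv.trans_apply, this, hψe_apply, map_one]
  have hχform : ∀ z : Circle, χ z = φ (ρ z v₀) := by
    intro z
    rw [key z v₀, hφv₀, mul_one]
  have hφcont : Continuous φ := LinearMap.continuous_of_finiteDimensional (φ : E →ₗ[ℝ] ℂ)
  have hχcont : Continuous χ := by
    have : χ = fun z => φ (ρ z v₀) := funext hχform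
    rw [this]
    exact hφcont.comp hρv₀
  -- |χ| = 1
  have hMn : ∀ z : Circle, ‖χ z‖ = 1 := by
    have hMhom : ∀ s t : ℝ, ‖χ (Circle.exp (s + t))‖ = ‖χ (Circle.exp s)‖ * ‖χ (Circle.exp t)‖ := by
      intro s t
      rw [Circle.exp_add, hχmul, norm_mul]
    have hMcont : Continuous fun t => ‖χ (Circle.exp t)‖ :=
      (hχcont.comp Circle.exp.continuous).norm
    have hMper : ‖χ (Circle.exp (2 * π))‖ = 1 := by
      rw [Circle.exp_two_pi, hχ1, norm_one]
    have := CircleRepAux.posHom_eq_one hMhom hMcont hMper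
    intro z
    have h1 := this (Complex.arg z)
    rwa [Circle.exp_arg] at h1
  -- χ as a circle-valued map
  set f : ℝ → Circle := fun t => ⟨χ (Circle.exp t), show χ (Circle.exp t) ∈ Metric.sphere (0:ℂ) 1
    from mem_sphere_zero_iff_norm.mpr (hMn (Circle.exp t))⟩ with hf
  have hfcoe : ∀ t, (f t : ℂ) = χ (Circle.exp t) := fun t => rfl
  have hfhom : ∀ s t : ℝ, f (s + t) = f s * f t := by
    intro s t
    apply Subtype.ext
    rw [Circle.coe_mul, hfcoe, hfcoe, hfcoe, Circle.exp_add, hχmul]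
  have hfcont : Continuous f :=
    Continuous.subtype_mk (hχcont.comp Circle.exp.continuous) _
  have hfper : f (2 * π) = 1 := by
    apply Subtype.ext
    rw [hfcoe, Circle.exp_two_pi, hχ1, Circle.coe_one]
  obtain ⟨n, hn⟩ := CircleRepAux.circleHom hfhom hfcont hfper
  have hχpow : ∀ z : Circle, χ z = ((z ^ n : Circle) : ℂ) := by
    intro z
    have h1 : χ z = (f (Complex.arg z) : ℂ) := by rw [hfcoe, Circle.exp_arg]
    rw [h1, hn]
    congr 1
    have hexp_hom : ∀ s t : ℝ, Circle.exp (s + t) = Circle.exp s * Circle.exp t :=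
      fun s t => Circle.exp_add s t
    rw [CircleRepAux.hom_zpow hexp_hom, Circle.exp_arg]
  have hn0 : n ≠ 0 := by
    intro hn0
    have : ∀ z : Circle, ρ z = LinearMap.id := by
      intro z
      apply LinearMap.ext
      intro v
      have h1 := key z v
      rw [hχpow z, hn0, zpow_zero, Circle.coe_one, one_mul] at h1
      exact φ.injective h1
    obtain ⟨z, hz⟩ := hnontriv
    exact hz (this z)
  constructor
  · rcases lt_or_gt_of_ne hn0 with hneg | hpos
    · -- use the conjugate isomorphism
      refine ⟨-n, by omega, φ.trans Complex.conjAe.toLinearEquiv, ?_⟩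
      intro z v
      have h1 := key z v
      simp only [LinearEquiv.trans_apply]
      rw [h1]
      rw [AlgEquiv.toLinearEquiv_apply, AlgEquiv.toLinearEquiv_apply]
      rw [Complex.conjAe_coe, map_mul]
      congr 1
      rw [hχpow z]
      rw [← Circle.coe_inv_eq_conj, ← zpow_neg]
    · refine ⟨n, hpos, φ, ?_⟩
      intro z v
      rw [key z v, hχpow z]
  · rw [← hfr, h2rank]
end
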